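/- Let a = diag(λ₁,λ₂,λ₃) be a real diagonal 3×3 matrix and b a real symmetric 3×3 matrix with off-diagonal entries b₂₃ = x, b₁₃ = y, b₁₂ = z (and arbitrary diagonal entries). Let M be the 3×3 matrix whose three rows are indexed by the off-diagonal slots (2,3), (1,3), (1,2) and whose columns consist of the corresponding entries of b, of (ab)ˢ = ab + ba, and of [a,b]² = (ab − ba)². Then det M = (λ₂ − λ₁)(λ₃ − λ₁)(λ₃ − λ₂)(x²y² + y²z² + z²x²). -/

import Mathlib

open Matrix BigOperators

noncomputable section

abbrev M3 := Matrix (Fin 3) (Fin 3) ℝ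

/-! Since `a` is diagonal, `(ab + ba)ᵢⱼ = (λᵢ + λⱼ) bᵢⱼ` and `[a,b]ᵢⱼ = (λᵢ - λⱼ) bᵢⱼ`, so for `i ≠ j`
only the third index `k` contributes to `([a,b]²)ᵢⱼ = (λᵢ - λₖ)(λₖ - λⱼ) bᵢₖ bₖⱼ`. With `b`
symmetric, every entry of `M` becomes an explicit polynomial in the `λᵢ` and `x, y, z`, and the
determinant is a polynomial identity. -/

namespace Matrix

variable {n R : Type*} [Fintype n] [DecidableEq n]

theorem diagonal_mul_add_mul_diagonal_apply [CommSemiring R] (d : n → R) (b : Matrix n n R)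
    (i j : n) : (diagonal d * b + b * diagonal d) i j = (d i + d j) * b i j := by
  rw [add_apply, diagonal_mul, mul_diagonal]
  ring

theorem diagonal_mul_sub_mul_diagonal_apply [CommRing R] (d : n → R) (b : Matrix n n R)
    (i j : n) : (diagonal d * b - b * diagonal d) i j = (d i - d j) * b i j := by
  rw [sub_apply, diagonal_mul, mul_diagonal]
  ring

theorem diagonal_mul_sub_mul_diagonal_sq_apply [CommRing R] (d : n → R) (b : Matrix n n R)
    (i j : n) : ((diagonal d * b - b * diagonal d) ^ 2) i j
      = ∑ k, (d i - d k) * (d k - d j) * (b i k * b k j) := by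
  rw [sq, mul_apply]
  refine Finset.sum_congr rfl fun k _ => ?_
  rw [diagonal_mul_sub_mul_diagonal_apply, diagonal_mul_sub_mul_diagonal_apply]
  ring

end Matrix

/-- Determinant of the matrix `M` built from the off-diagonal slots `(2,3), (1,3), (1,2)`
of `b`, `(ab)ˢ = ab+ba` and `[a,b]² = (ab−ba)²`, for `a = diag(λ₁,λ₂,λ₃)` and `b`
symmetric with `b₂₃ = x`, `b₁₃ = y`, `b₁₂ = z`. -/
theorem stmt10 (l1 l2 l3 x y z : ℝ) (b : M3) (hb : b.IsSymm)
    (hx : b 1 2 = x) (hy : b 0 2 = y) (hz : b 0 1 = z) :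
    let a : M3 := Matrix.diagonal ![l1, l2, l3]
    (Matrix.of
      ![![b 1 2, (a * b + b * a) 1 2, ((a * b - b * a) ^ 2) 1 2],
        ![b 0 2, (a * b + b * a) 0 2, ((a * b - b * a) ^ 2) 0 2],
        ![b 0 1, (a * b + b * a) 0 1, ((a * b - b * a) ^ 2) 0 1]]).det
      = (l2 - l1) * (l3 - l1) * (l3 - l2) *
          (x ^ 2 * y ^ 2 + y ^ 2 * z ^ 2 + z ^ 2 * x ^ 2) := by
  have hx' : b 2 1 = x := by rw [← hx, hb.apply 1 2]
  have hz' : b 1 0 = z := by rw [← hz, hb.apply 0 1]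
  intro a
  rw [det_fin_three]
  simp only [a, of_apply, cons_val, diagonal_mul_add_mul_diagonal_apply,
    diagonal_mul_sub_mul_diagonal_sq_apply, Fin.sum_univ_three, hx, hy, hz, hx', hz']
  ring
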